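/- Let I ⊂ S = K[x_1,...,x_n] be a squarefree monomial ideal generated in degree d, and let k satisfy kd = (k−1)n + 1. If I is not principal and depth S/I^k = 0, then depth S/I^j > 0 for all 1 ≤ j < k and depth S/I^ℓ = 0 for all ℓ ≥ k; in particular dstab(I) = k < n, where dstab(I) is the least m such that depth S/I^m = depth S/I^j for all j ≥ m. -/
import Mathlib


open MvPolynomial Pointwise

namespace Stmt19Aux

variable {n : ℕ} {K : Type*} [Field K]

/-- exponent vector of the squarefree monomial attached to `F` -/
noncomputable def E (F : Finset (Fin n)) : Fin n →₀ ℕ := ∑ i ∈ F, Finsupp.single i 1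

/-- total degree of an exponent vector -/
def deg (b : Fin n →₀ ℕ) : ℕ := ∑ i, b i

lemma deg_add (b c : Fin n →₀ ℕ) : deg (b + c) = deg b + deg c := by
  simp [deg, Finset.sum_add_distrib]

lemma deg_mono {b c : Fin n →₀ ℕ} (h : b ≤ c) : deg b ≤ deg c :=
  Finset.sum_le_sum fun i _ => h i

lemma deg_sum {α : Type*} (s : Finset α) (g : α → (Fin n →₀ ℕ)) :
    deg (∑ t ∈ s, g t) = ∑ t ∈ s, deg (g t) := by
  simp only [deg, Finsupp.coe_finset_sum, Finset.sum_apply]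
  exact Finset.sum_comm

lemma deg_smul (m : ℕ) (b : Fin n →₀ ℕ) : deg (m • b) = m * deg b := by
  simp [deg, Finset.mul_sum]

lemma deg_single (i : Fin n) : deg (Finsupp.single i (1 : ℕ)) = 1 := by
  classical
  simp [deg, Finsupp.single_apply]

lemma E_apply (F : Finset (Fin n)) (i : Fin n) : E F i = if i ∈ F then 1 else 0 := by
  classical
  simp [E, Finsupp.finset_sum_apply, Finsupp.single_apply]

lemma deg_E (F : Finset (Fin n)) : deg (E F) = F.card := by
  rw [E, deg_sum]
  simp [deg_single]

lemma prod_X_eq (F : Finset (Fin n)) :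
    (∏ i ∈ F, (X i : MvPolynomial (Fin n) K)) = monomial (E F) 1 := by
  rw [E, monomial_sum_one]
  exact Finset.prod_congr rfl fun i _ => rfl

lemma X_mul_monomial (i : Fin n) (u : Fin n →₀ ℕ) :
    (X i : MvPolynomial (Fin n) K) * monomial u 1
      = monomial (Finsupp.single i 1 + u) 1 := by
  rw [monomial_single_add, pow_one]

/-- Membership of a monomial in the `j`-th power of a squarefree monomial ideal. -/
lemma mem_pow_iff (𝒮 : Set (Finset (Fin n))) (j : ℕ) (b : Fin n →₀ ℕ) :
    (monomial b (1 : K)) ∈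
      (Ideal.span ((fun F : Finset (Fin n) =>
        ∏ i ∈ F, (X i : MvPolynomial (Fin n) K)) '' 𝒮)) ^ j ↔
    ∃ f : Fin j → Finset (Fin n), (∀ t, f t ∈ 𝒮) ∧ ∑ t, E (f t) ≤ b := by
  classical
  have himg : ((fun F : Finset (Fin n) => ∏ i ∈ F, (X i : MvPolynomial (Fin n) K)) '' 𝒮)
      = (fun c => monomial c (1 : K)) '' (E '' 𝒮) := by
    rw [Set.image_image]
    exact Set.image_congr' prod_X_eq
  rw [himg]
  constructor
  · intro h
    have hsp : Ideal.span ((fun c => monomial c (1 : K)) '' (E '' 𝒮)) ^ j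
        = Ideal.span (((fun c => monomial c (1 : K)) '' (E '' 𝒮)) ^ j) :=
      Submodule.span_pow _ j
    rw [hsp] at h
    set T : Set (Fin n →₀ ℕ) :=
      {c | ∃ f : Fin j → Finset (Fin n), (∀ t, f t ∈ 𝒮) ∧ c = ∑ t, E (f t)} with hT
    have hsub : ((fun c => monomial c (1 : K)) '' (E '' 𝒮)) ^ j
        ⊆ (fun c => monomial c (1 : K)) '' T := by
      rw [Set.image_image]
      intro x hx
      obtain ⟨f, hf⟩ := Set.mem_pow.mp hx
      choose F hF hFe using fun t => (f t).2
      refine ⟨∑ t, E (F t), ⟨F, hF, rfl⟩, ?_⟩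
      show monomial (∑ t, E (F t)) (1 : K) = x
      rw [monomial_sum_one, ← hf, List.prod_ofFn]
      exact Finset.prod_congr rfl fun t _ => hFe t
    have h2 : monomial b (1 : K) ∈ Ideal.span ((fun c => monomial c (1 : K)) '' T) :=
      Ideal.span_mono hsub h
    obtain ⟨c, hcT, hcb⟩ := mem_ideal_span_monomial_image.mp h2 b
      (by rw [support_monomial, if_neg one_ne_zero]; exact Finset.mem_singleton_self b)
    obtain ⟨f, hf, rfl⟩ := hcT
    exact ⟨f, hf, hcb⟩
  · rintro ⟨f, hf, hle⟩
    obtain ⟨r, rfl⟩ := le_iff_exists_add.mp hle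
    have hmem : monomial (∑ t, E (f t)) (1 : K)
        ∈ (Ideal.span ((fun c => monomial c (1 : K)) '' (E '' 𝒮))) ^ j := by
      rw [monomial_sum_one]
      have := Ideal.prod_mem_prod
        (I := fun _ : Fin j => Ideal.span ((fun c => monomial c (1 : K)) '' (E '' 𝒮)))
        (fun t (_ : t ∈ Finset.univ) => Ideal.subset_span ⟨E (f t), ⟨f t, hf t, rfl⟩, rfl⟩)
      simpa [Finset.prod_const] using this
    have h3 : monomial ((∑ t, E (f t)) + r) (1 : K)
        = monomial (∑ t, E (f t)) (1 : K) * monomial r 1 := by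
      rw [monomial_mul, one_mul]
    rw [h3]
    exact Ideal.mul_mem_right _ _ hmem

/-- a monomial socle element of `I^j` has all exponents at most `j - 1` -/
lemma socle_bound (𝒮 : Set (Finset (Fin n))) {j : ℕ} {u : Fin n →₀ ℕ}
    (hu : monomial u (1 : K) ∉
      (Ideal.span ((fun F : Finset (Fin n) =>
        ∏ i ∈ F, (X i : MvPolynomial (Fin n) K)) '' 𝒮)) ^ j)
    (hx : ∀ i, (X i : MvPolynomial (Fin n) K) * monomial u 1 ∈
      (Ideal.span ((fun F : Finset (Fin n) =>
        ∏ i ∈ F, (X i : MvPolynomial (Fin n) K)) '' 𝒮)) ^ j)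
    (i : Fin n) : u i + 1 ≤ j := by
  classical
  have hxi := hx i
  rw [X_mul_monomial] at hxi
  obtain ⟨f, hf, hle⟩ := (mem_pow_iff 𝒮 j _).mp hxi
  by_contra hcon
  apply hu
  refine (mem_pow_iff 𝒮 j u).mpr ⟨f, hf, ?_⟩
  have hsum : ∀ i', (∑ t, E (f t)) i' ≤ j := by
    intro i'
    rw [Finsupp.finset_sum_apply]
    calc ∑ t, E (f t) i' ≤ ∑ _t : Fin j, 1 :=
          Finset.sum_le_sum fun t _ => by rw [E_apply]; split <;> omega
      _ = j := by simp
  have hptw := Finsupp.le_def.mp hle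
  refine Finsupp.le_def.mpr fun i' => ?_
  rcases eq_or_ne i' i with rfl | hne
  · exact le_trans (hsum i') (by omega)
  · have h2 := hptw i'
    rw [Finsupp.add_apply, Finsupp.single_apply, if_neg (fun h => hne h.symm)] at h2
    simpa using h2

/-- degree bound for monomials in `I^j` -/
lemma deg_of_mem (𝒮 : Set (Finset (Fin n))) {d : ℕ} (hdeg : ∀ F ∈ 𝒮, F.card = d)
    {j : ℕ} {b : Fin n →₀ ℕ}
    (h : monomial b (1 : K) ∈
      (Ideal.span ((fun F : Finset (Fin n) =>
        ∏ i ∈ F, (X i : MvPolynomial (Fin n) K)) '' 𝒮)) ^ j) :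
    j * d ≤ deg b := by
  obtain ⟨f, hf, hle⟩ := (mem_pow_iff 𝒮 j b).mp h
  calc j * d = ∑ _t : Fin j, d := by simp [mul_comm]
    _ = ∑ t, deg (E (f t)) := Finset.sum_congr rfl fun t _ => by
        rw [deg_E, hdeg _ (hf t)]
    _ = deg (∑ t, E (f t)) := (deg_sum _ _).symm
    _ ≤ deg b := deg_mono hle

end Stmt19Aux

open Stmt19Aux

/-- Let `I` be a squarefree monomial ideal generated in degree `d`, `k ≥ 2` with
`k*d = (k-1)*n + 1`, `I` not principal and `depth S/I^k = 0`. Then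
`depth S/I^j > 0` for `1 ≤ j < k`, `depth S/I^ℓ = 0` for all `ℓ ≥ k` (so the depth
function stabilizes exactly at `k`, `dstab(I) = k`), and `k < n`. Depth zero is
expressed by the existence of a monomial socle element. -/
theorem stmt19 (n d k : ℕ) (hn : 1 < n) (hk : 2 ≤ k) (hkd : k * d = (k - 1) * n + 1)
    (K : Type*) [Field K]
    (𝒮 : Set (Finset (Fin n))) (hdeg : ∀ F ∈ 𝒮, F.card = d)
    (I : Ideal (MvPolynomial (Fin n) K))
    (hI : I = Ideal.span ((fun F : Finset (Fin n) => ∏ i ∈ F, (X i : MvPolynomial (Fin n) K)) '' 𝒮))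
    (hprinc : ¬ Submodule.IsPrincipal I)
    (hdepth : ∃ a : Fin n →₀ ℕ, (monomial a (1 : K)) ∉ I ^ k ∧
        ∀ i : Fin n, X i * monomial a (1 : K) ∈ I ^ k) :
    (∀ j : ℕ, 1 ≤ j → j < k →
      ¬ ∃ a : Fin n →₀ ℕ, (monomial a (1 : K)) ∉ I ^ j ∧
          ∀ i : Fin n, X i * monomial a (1 : K) ∈ I ^ j) ∧
    (∀ ℓ : ℕ, k ≤ ℓ → ∃ a : Fin n →₀ ℕ, (monomial a (1 : K)) ∉ I ^ ℓ ∧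
        ∀ i : Fin n, X i * monomial a (1 : K) ∈ I ^ ℓ) ∧
    k < n := by
  subst hI
  obtain ⟨k', rfl⟩ : ∃ k', k = k' + 1 := ⟨k - 1, by omega⟩
  simp only [Nat.add_sub_cancel] at hkd
  -- hkd : (k' + 1) * d = k' * n + 1
  obtain ⟨u, hu, hxu⟩ := hdepth
  have i₀ : Fin n := ⟨0, by omega⟩
  refine ⟨?_, ?_, ?_⟩
  · -- part 1 : no socle below k
    rintro j hj1 hjk ⟨v, hv, hxv⟩
    obtain ⟨j', rfl⟩ : ∃ j', j = j' + 1 := ⟨j - 1, by omega⟩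
    have hvb : ∀ i, v i + 1 ≤ j' + 1 := socle_bound 𝒮 hv hxv
    have hdle : deg v ≤ n * j' := by
      calc deg v = ∑ i, v i := rfl
        _ ≤ ∑ _i : Fin n, j' := Finset.sum_le_sum fun i _ => by have := hvb i; omega
        _ = n * j' := by simp [mul_comm]
    have hdge : (j' + 1) * d ≤ deg v + 1 := by
      have h0 : monomial (Finsupp.single i₀ 1 + v) (1 : K) ∈
          (Ideal.span ((fun F : Finset (Fin n) =>
            ∏ i ∈ F, (X i : MvPolynomial (Fin n) K)) '' 𝒮)) ^ (j' + 1) := by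
        rw [← X_mul_monomial]; exact hxv i₀
      have := deg_of_mem 𝒮 hdeg h0
      rwa [deg_add, deg_single, add_comm 1 (deg v)] at this
    -- arithmetic contradiction
    have key : (k' + 1) * (j' * n + 1) < (k' + 1) * ((j' + 1) * d) := by
      have h1 : (k' + 1) * ((j' + 1) * d) = (j' + 1) * (k' * n + 1) := by
        rw [show (k' + 1) * ((j' + 1) * d) = (j' + 1) * ((k' + 1) * d) by ring, hkd]
      rw [h1]
      obtain ⟨m, hm1, rfl⟩ : ∃ m, 1 ≤ m ∧ k' = j' + m := ⟨k' - j', by omega, by omega⟩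
      have h2 : m * 2 ≤ m * n := Nat.mul_le_mul_left m hn
      nlinarith [h2, hm1]
    have key2 : j' * n + 1 < (j' + 1) * d := Nat.lt_of_mul_lt_mul_left key
    have hcm : n * j' = j' * n := mul_comm n j'
    linarith
  · -- part 2 : socle persists above k
    intro ℓ hℓ
    have hub : ∀ i, u i + 1 ≤ k' + 1 := socle_bound 𝒮 hu hxu
    have h0 : monomial (Finsupp.single i₀ 1 + u) (1 : K) ∈
        (Ideal.span ((fun F : Finset (Fin n) =>
          ∏ i ∈ F, (X i : MvPolynomial (Fin n) K)) '' 𝒮)) ^ (k' + 1) := by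
      rw [← X_mul_monomial]; exact hxu i₀
    obtain ⟨f0, hf0, -⟩ := (mem_pow_iff 𝒮 (k' + 1) _).mp h0
    set F₀ : Finset (Fin n) := f0 ⟨0, by omega⟩ with hF₀
    have hF₀S : F₀ ∈ 𝒮 := hf0 _
    refine ⟨u + (ℓ - (k' + 1)) • E F₀, ?_, ?_⟩
    · intro hmem
      have h1 := deg_of_mem 𝒮 hdeg hmem
      have h2 : deg (u + (ℓ - (k' + 1)) • E F₀) = deg u + (ℓ - (k' + 1)) * d := by
        rw [deg_add, deg_smul, deg_E, hdeg _ hF₀S]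
      have h3 : deg u ≤ n * k' := by
        calc deg u = ∑ i, u i := rfl
          _ ≤ ∑ _i : Fin n, k' := Finset.sum_le_sum fun i _ => by have := hub i; omega
          _ = n * k' := by simp [mul_comm]
      have e : ℓ * d = (k' + 1) * d + (ℓ - (k' + 1)) * d := by
        rw [← add_mul]
        congr 1
        omega
      have hcm : n * k' = k' * n := mul_comm n k'
      linarith
    · intro i
      have heq : (X i : MvPolynomial (Fin n) K) * monomial (u + (ℓ - (k' + 1)) • E F₀) 1
          = (X i * monomial u 1) * monomial ((ℓ - (k' + 1)) • E F₀) 1 := by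
        rw [mul_assoc, monomial_mul, one_mul]
      rw [heq]
      have hg : monomial (E F₀) (1 : K) ∈
          Ideal.span ((fun F : Finset (Fin n) =>
            ∏ i ∈ F, (X i : MvPolynomial (Fin n) K)) '' 𝒮) :=
        Ideal.subset_span ⟨F₀, hF₀S, prod_X_eq F₀⟩
      have hp : monomial ((ℓ - (k' + 1)) • E F₀) (1 : K) ∈
          (Ideal.span ((fun F : Finset (Fin n) =>
            ∏ i ∈ F, (X i : MvPolynomial (Fin n) K)) '' 𝒮)) ^ (ℓ - (k' + 1)) := by
        have hmp : monomial ((ℓ - (k' + 1)) • E F₀) (1 : K)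
            = (monomial (E F₀) (1 : K)) ^ (ℓ - (k' + 1)) := by
          rw [monomial_pow, one_pow]
        rw [hmp]
        exact Ideal.pow_mem_pow hg _
      have hmm := Ideal.mul_mem_mul (hxu i) hp
      rwa [← pow_add, show k' + 1 + (ℓ - (k' + 1)) = ℓ by omega] at hmm
  · -- part 3 : k < n
    have hdn : d < n := by
      by_contra h'
      push_neg at h'
      have h2 : (k' + 1) * n ≤ (k' + 1) * d := Nat.mul_le_mul_left _ h'
      rw [hkd] at h2
      nlinarith [h2, hn]
    obtain ⟨m, hm1, hnm⟩ : ∃ m, 1 ≤ m ∧ n = d + m := ⟨n - d, by omega, by omega⟩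
    have e2 : (k' + 1) * n = (k' + 1) * d + (k' + 1) * m := by rw [hnm]; ring
    have e3 : (k' + 1) * n = k' * n + n := by ring
    have e5 : k' + 1 ≤ (k' + 1) * m := Nat.le_mul_of_pos_right _ (by omega)
    linarith
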